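/- Online gradient descent regret bound: for convex differentiable losses l_t on R^p, the iterates w_{t+1} = w_t - α_t ∇l_t(w_t) with positive stepsizes α_t satisfy, for every w ∈ R^p, Σ_{t=1}^T l_t(w_t) - Σ_{t=1}^T l_t(w) ≤ ||w_1 - w||²/(2α_1) + Σ_{t=2}^T (||w_t - w||²/2)(1/α_t - 1/α_{t-1}) + Σ_{t=1}^T (α_t/2)||∇l_t(w_t)||². -/

import Mathlib

/-!
Convexity bounds each instantaneous regret `l t (w t) - l t v` by the linear term
`⟪∇l t (w t), w t - v⟫`. Expanding `‖w (t+1) - v‖²` along the update writes this term as a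
difference of squared distances to `v`, scaled by `1 / α t`, plus `α t / 2 ‖∇l t (w t)‖²`.
Summation by parts turns the scaled differences into the stepsize-change terms, up to a final
term `-‖w (T+1) - v‖² / (2 α T)`, which is dropped since it is nonpositive.
-/

open Finset
open scoped RealInnerProductSpace

theorem ConvexOn.add_fderiv_sub_le {E : Type*} [NormedAddCommGroup E] [NormedSpace ℝ E]
    {s : Set E} {f : E → ℝ} {f' : E →L[ℝ] ℝ} {x y : E}
    (hf : ConvexOn ℝ s f) (hx : x ∈ s) (hy : y ∈ s) (hf' : HasFDerivAt f f' x) :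
    f x + f' (y - x) ≤ f y := by
  set φ : ℝ → ℝ := fun r => f (AffineMap.lineMap x y r)
  have hline : HasDerivAt (fun r : ℝ => AffineMap.lineMap x y r) (y - x) 0 := by
    simpa [AffineMap.lineMap_apply_module'] using
      ((hasDerivAt_id (0 : ℝ)).smul_const (y - x)).add_const x
  have hφ' : HasDerivAt φ (f' (y - x)) 0 := by
    have hf'0 : HasFDerivAt f f' (AffineMap.lineMap x y (0 : ℝ)) := by
      simpa using hf'
    exact hf'0.comp_hasDerivAt 0 hline
  have hφ : ConvexOn ℝ (AffineMap.lineMap x y ⁻¹' s) φ := hf.comp_affineMap _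
  have hslope := hφ.le_slope_of_hasDerivAt (by simpa using hx) (by simpa using hy)
    zero_lt_one hφ'
  have hφ01 : slope φ 0 1 = f y - f x := by simp [φ, slope_def_field]
  linarith

theorem ConvexOn.sub_le_inner_gradient {F : Type*} [NormedAddCommGroup F]
    [InnerProductSpace ℝ F] [CompleteSpace F] {s : Set F} {f : F → ℝ} {x y : F}
    (hf : ConvexOn ℝ s f) (hx : x ∈ s) (hy : y ∈ s) (hd : DifferentiableAt ℝ f x) :
    f x - f y ≤ ⟪gradient f x, x - y⟫ := by
  have h := hf.add_fderiv_sub_le hx hy hd.hasGradientAt.hasFDerivAt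
  rw [InnerProductSpace.toDual_apply_apply, ← neg_sub x y, inner_neg_right] at h
  linarith

theorem real_inner_eq_of_descent_step {F : Type*} [NormedAddCommGroup F]
    [InnerProductSpace ℝ F] {a : ℝ} (ha : a ≠ 0) (x g v : F) :
    ⟪g, x - v⟫ = 1 / a * (‖x - v‖ ^ 2 / 2 - ‖x - a • g - v‖ ^ 2 / 2) + a / 2 * ‖g‖ ^ 2 := by
  have hexpand : ‖x - a • g - v‖ ^ 2 = ‖x - v‖ ^ 2 - 2 * (a * ⟪g, x - v⟫) + a ^ 2 * ‖g‖ ^ 2 := by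
    rw [sub_right_comm, norm_sub_sq_real, real_inner_smul_right, norm_smul, real_inner_comm,
      mul_pow, Real.norm_eq_abs, sq_abs]
  rw [hexpand]
  field_simp
  ring

theorem sum_Icc_mul_sub_succ_add (a b : ℕ → ℝ) {T : ℕ} (hT : 1 ≤ T) :
    ∑ t ∈ Icc 1 T, b t * (a t - a (t + 1)) + b T * a (T + 1) =
      b 1 * a 1 + ∑ t ∈ Icc 2 T, a t * (b t - b (t - 1)) := by
  induction T, hT using Nat.le_induction with
  | base => rw [Icc_self, sum_singleton, Icc_eq_empty_of_lt one_lt_two, sum_empty]; ring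
  | succ n hn ih =>
    rw [sum_Icc_succ_top (by omega), sum_Icc_succ_top (by omega), Nat.add_sub_cancel]
    linear_combination ih

theorem sum_Icc_mul_sub_succ_le (a b : ℕ → ℝ) (ha : ∀ t, 0 ≤ a t) (hb : ∀ t, 0 ≤ b t)
    (T : ℕ) :
    ∑ t ∈ Icc 1 T, b t * (a t - a (t + 1)) ≤
      b 1 * a 1 + ∑ t ∈ Icc 2 T, a t * (b t - b (t - 1)) := by
  rcases Nat.eq_zero_or_pos T with rfl | hT
  · simpa using mul_nonneg (hb 1) (ha 1)
  · rw [← sum_Icc_mul_sub_succ_add a b hT]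
    linarith [mul_nonneg (hb T) (ha (T + 1))]

theorem online_gradient_descent_regret_general
    {p : ℕ} (l : ℕ → EuclideanSpace ℝ (Fin p) → ℝ)
    (hconv : ∀ t, ConvexOn ℝ Set.univ (l t))
    (hdiff : ∀ t, Differentiable ℝ (l t))
    (α : ℕ → ℝ) (hα : ∀ t, 0 < α t)
    (w : ℕ → EuclideanSpace ℝ (Fin p))
    (hupd : ∀ t, w (t + 1) = w t - α t • gradient (l t) (w t))
    (T : ℕ) (v : EuclideanSpace ℝ (Fin p)) :
    ∑ t ∈ Finset.Icc 1 T, l t (w t) - ∑ t ∈ Finset.Icc 1 T, l t v ≤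
      ‖w 1 - v‖ ^ 2 / (2 * α 1)
      + ∑ t ∈ Finset.Icc 2 T, (‖w t - v‖ ^ 2 / 2) * (1 / α t - 1 / α (t - 1))
      + ∑ t ∈ Finset.Icc 1 T, (α t / 2) * ‖gradient (l t) (w t)‖ ^ 2 := by
  set g := fun t => gradient (l t) (w t)
  set a := fun t => ‖w t - v‖ ^ 2 / 2
  set b := fun t => 1 / α t
  have hstep (t : ℕ) : ⟪g t, w t - v⟫ = b t * (a t - a (t + 1)) + α t / 2 * ‖g t‖ ^ 2 := by
    simp only [a, b, hupd t]
    exact real_inner_eq_of_descent_step (hα t).ne' (w t) (g t) v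
  have hparts := sum_Icc_mul_sub_succ_le a b (fun t => by positivity)
    (fun t => (one_div_pos.mpr (hα t)).le) T
  have hfirst : b 1 * a 1 = ‖w 1 - v‖ ^ 2 / (2 * α 1) := by simp only [a, b]; ring
  calc ∑ t ∈ Icc 1 T, l t (w t) - ∑ t ∈ Icc 1 T, l t v
      = ∑ t ∈ Icc 1 T, (l t (w t) - l t v) := (sum_sub_distrib _ _).symm
    _ ≤ ∑ t ∈ Icc 1 T, ⟪g t, w t - v⟫ := sum_le_sum fun t _ =>
        (hconv t).sub_le_inner_gradient (Set.mem_univ _) (Set.mem_univ _) (hdiff t _)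
    _ = ∑ t ∈ Icc 1 T, b t * (a t - a (t + 1)) + ∑ t ∈ Icc 1 T, α t / 2 * ‖g t‖ ^ 2 := by
        rw [← sum_add_distrib]
        exact sum_congr rfl fun t _ => hstep t
    _ ≤ _ := by linarith

/-- Online gradient descent regret bound for convex differentiable losses. -/
theorem online_gradient_descent_regret
    {p : ℕ} (l : ℕ → EuclideanSpace ℝ (Fin p) → ℝ)
    (hconv : ∀ t, ConvexOn ℝ Set.univ (l t))
    (hdiff : ∀ t, Differentiable ℝ (l t))
    (α : ℕ → ℝ) (hα : ∀ t, 0 < α t)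
    (w : ℕ → EuclideanSpace ℝ (Fin p))
    (hupd : ∀ t, w (t + 1) = w t - α t • gradient (l t) (w t))
    (T : ℕ) (hT : 1 ≤ T) (v : EuclideanSpace ℝ (Fin p)) :
    ∑ t ∈ Finset.Icc 1 T, l t (w t) - ∑ t ∈ Finset.Icc 1 T, l t v ≤
      ‖w 1 - v‖ ^ 2 / (2 * α 1)
      + ∑ t ∈ Finset.Icc 2 T, (‖w t - v‖ ^ 2 / 2) * (1 / α t - 1 / α (t - 1))
      + ∑ t ∈ Finset.Icc 1 T, (α t / 2) * ‖gradient (l t) (w t)‖ ^ 2 :=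
  online_gradient_descent_regret_general l hconv hdiff α hα w hupd T v
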